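/- For all integers a ≥ 1, d ≥ 1 and b ≥ 2, one has |[2*(a−1), b, 2, 2*(d−1)]| = (a + d + 1) + (d + 1)·a·(b − 2). -/

import Mathlib

/-! A block of `n` twos acts on the pair `(hj (x :: l), hj l)` as the `n`-th power of
`[[2, -1], [1, 0]]`, namely `[[n + 1, -n], [n, 1 - n]]`; applying this to both blocks of twos
reduces the numerator to a polynomial in `a`, `b`, `d`. -/

/-- Hirzebruch–Jung numerator: |[]| = 1, |[n]| = n,
|[n₁, n₂, …]| = n₁·|[n₂, …]| − |[n₃, …]|. -/
def hj : List ℤ → ℤ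
  | [] => 1
  | [n] => n
  | n :: m :: l => n * hj (m :: l) - hj l

lemma hj_cons_cons (x y : ℤ) (l : List ℤ) : hj (x :: y :: l) = x * hj (y :: l) - hj l := rfl

lemma hj_replicate_two_append (n : ℕ) (x : ℤ) (l : List ℤ) :
    hj (List.replicate n 2 ++ x :: l) = (n + 1) * hj (x :: l) - n * hj l := by
  induction n using Nat.twoStepInduction with
  | zero => simp
  | one => simp [hj_cons_cons]
  | more n ih₁ ih₂ =>
    simp only [List.replicate_succ, List.cons_append] at ih₂ ⊢
    rw [hj_cons_cons, ih₂, ih₁]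
    push_cast
    ring

lemma hj_replicate_two (n : ℕ) : hj (List.replicate n 2) = n + 1 := by
  cases n with
  | zero => rfl
  | succ n =>
    rw [List.replicate_succ', hj_replicate_two_append n 2 []]
    simp only [hj]
    push_cast
    ring

lemma hj_cons_replicate_two (x : ℤ) (n : ℕ) : hj (x :: List.replicate n 2) = x * (n + 1) - n := by
  cases n with
  | zero => simp [hj]
  | succ n =>
    rw [List.replicate_succ, hj_cons_cons, ← List.replicate_succ, hj_replicate_two,
      hj_replicate_two]
    push_cast
    ring

lemma hj_replicate_two_append_cons_replicate_two (m k : ℕ) (b : ℤ) :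
    hj (List.replicate m 2 ++ b :: List.replicate (k + 1) 2) =
      (m + 1) * (b * (k + 2) - (k + 1)) - m * (k + 2) := by
  rw [hj_replicate_two_append, hj_cons_replicate_two, hj_replicate_two]
  push_cast
  ring

theorem hj_two_a_b_two_two_d_general (a d b : ℤ) (ha : 1 ≤ a) (hd : 1 ≤ d) :
    hj (List.replicate (a - 1).toNat 2 ++ [b, 2] ++ List.replicate (d - 1).toNat 2) =
      (a + d + 1) + (d + 1) * a * (b - 2) := by
  obtain ⟨m, rfl⟩ : ∃ m : ℕ, a = m + 1 := ⟨(a - 1).toNat, by omega⟩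
  obtain ⟨k, rfl⟩ : ∃ k : ℕ, d = k + 1 := ⟨(d - 1).toNat, by omega⟩
  have hlist : List.replicate m (2 : ℤ) ++ [b, 2] ++ List.replicate k 2 =
      List.replicate m 2 ++ b :: List.replicate (k + 1) 2 := by
    simp [List.replicate_succ]
  simp only [add_sub_cancel_right, Int.toNat_natCast, hlist,
    hj_replicate_two_append_cons_replicate_two]
  ring

theorem hj_two_a_b_two_two_d (a d b : ℤ) (ha : 1 ≤ a) (hd : 1 ≤ d) (hb : 2 ≤ b) :
    hj (List.replicate (a - 1).toNat 2 ++ [b, 2] ++ List.replicate (d - 1).toNat 2) =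
      (a + d + 1) + (d + 1) * a * (b - 2) :=
  hj_two_a_b_two_two_d_general a d b ha hd
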